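/- In the timed modal epistemic logic tK, from hypotheses K¹(E₁ ∨ E₂) and φ, where φ = (E₁ ⊻ E₂) ∧ (E₁ → ⋀_{0≤i<10} ¬Kⁱ E₁) ∧ (E₂ → (⋀_{0≤i<20} ¬Kⁱ E₂ ∧ ⋀_{10<i≤20} Kⁱ ¬E₁)), one can derive ¬E₂. -/

import Mathlib

/-- Formulas of timed modal epistemic logic: `K i A` means "`A` is known at
time `i`". -/
inductive Fm : Type
  | atom : ℕ → Fm
  | bot : Fm
  | imp : Fm → Fm → Fm
  | K : ℕ → Fm → Fm

namespace Fm

def neg (A : Fm) : Fm := imp A bot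
def disj (A B : Fm) : Fm := imp (neg A) B
def conj (A B : Fm) : Fm := neg (imp A (neg B))
/-- Exclusive disjunction. -/
def xor' (A B : Fm) : Fm := conj (disj A B) (neg (conj A B))

/-- Big conjunction of a list of formulas. -/
def bigConj (l : List Fm) : Fm := l.foldr conj (neg bot)

end Fm

open Fm

/-- The teacher's announcement `φ` for the two-day Surprise Test Paradox
(announcement at time 0, Friday class at time 10, Wednesday class at time 20):
exactly one of `E₁`, `E₂` holds; if `E₁` then `¬Kⁱ E₁` for all `0 ≤ i < 10`;
if `E₂` then `¬Kⁱ E₂` for all `0 ≤ i < 20` and `Kⁱ ¬E₁` for all `10 < i ≤ 20`. -/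
def phi (E₁ E₂ : Fm) : Fm :=
  conj (xor' E₁ E₂)
    (conj (imp E₁ (bigConj ((List.range 10).map fun i => neg (K i E₁))))
      (imp E₂ (conj (bigConj ((List.range 20).map fun i => neg (K i E₂)))
        (bigConj ((List.range 10).map fun j => K (j + 11) (neg E₁))))))

/-- Provability in the timed modal epistemic logic tK: propositional
tautologies (via a Hilbert basis), axiom tK: `Kⁱ(A→B) → (Kʲ A → Kᵏ B)` for
`i, j < k`, monotonicity Mon: `Kⁱ A → Kʲ A` for `i < j`; rules: MP, deduction
by epistemization DE, and epistemization E. -/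
inductive TK : Fm → Prop
  | ax1 (A B : Fm) : TK (imp A (imp B A))
  | ax2 (A B C : Fm) : TK (imp (imp A (imp B C)) (imp (imp A B) (imp A C)))
  | ax3 (A B : Fm) : TK (imp (imp (neg A) (neg B)) (imp B A))
  | tk {i j k : ℕ} (hik : i < k) (hjk : j < k) (A B : Fm) :
      TK (imp (K i (imp A B)) (imp (K j A) (K k B)))
  | mon {i j : ℕ} (hij : i < j) (A : Fm) : TK (imp (K i A) (K j A))
  | mp {A B : Fm} : TK (imp A B) → TK A → TK B
  | de {i j : ℕ} (hij : i < j) {A : Fm} : TK A → TK (imp (K i A) (K j (K i A)))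
  | e (i : ℕ) {A : Fm} : TK A → TK (K i A)

/-- Derivability in tK from a list of hypotheses. -/
inductive Deriv (Γ : List Fm) : Fm → Prop
  | hyp {A : Fm} : A ∈ Γ → Deriv Γ A
  | thm {A : Fm} : TK A → Deriv Γ A
  | mp {A B : Fm} : Deriv Γ (imp A B) → Deriv Γ A → Deriv Γ B

/-!
Suppose the test is on Wednesday (`E₂`). The announcement then gives `K¹²¬E₁`
(Friday has passed without a test) and the surprise clause `¬K¹³E₂`. But the
student knew at time 1 that `¬E₁ → E₂`, so axiom tK with `1, 12 < 13` yields
`K¹³E₂`, a contradiction; the deduction theorem discharges `E₂`.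
-/

namespace Deriv

variable {Γ : List Fm}

theorem mono {Δ : List Fm} (h : Γ ⊆ Δ) {A : Fm} (d : Deriv Γ A) : Deriv Δ A := by
  induction d with
  | hyp hA => exact hyp (h hA)
  | thm t => exact thm t
  | mp _ _ ih₁ ih₂ => exact mp ih₁ ih₂

theorem imp_self (A : Fm) : Deriv Γ (imp A A) :=
  mp (mp (thm (TK.ax2 A (imp A A) A)) (thm (TK.ax1 A (imp A A)))) (thm (TK.ax1 A A))

theorem deduction {A B : Fm} (d : Deriv (A :: Γ) B) : Deriv Γ (imp A B) := by
  induction d with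
  | hyp hB =>
    cases hB with
    | head => exact imp_self A
    | tail _ hB => exact mp (thm (TK.ax1 _ _)) (hyp hB)
  | thm t => exact mp (thm (TK.ax1 _ _)) (thm t)
  | mp _ _ ih₁ ih₂ => exact mp (mp (thm (TK.ax2 _ _ _)) ih₁) ih₂

theorem bot_imp (A : Fm) : Deriv Γ (imp bot A) :=
  mp (thm (TK.ax3 A bot)) (mp (thm (TK.ax1 (neg bot) (neg A))) (imp_self bot))

theorem imp_trans {A B C : Fm} (hAB : Deriv Γ (imp A B)) (hBC : Deriv Γ (imp B C)) :
    Deriv Γ (imp A C) :=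
  deduction <| mp (hBC.mono (List.subset_cons_self _ _))
    (mp (hAB.mono (List.subset_cons_self _ _)) (hyp List.mem_cons_self))

theorem imp_neg_neg (A : Fm) : Deriv Γ (imp A (neg (neg A))) :=
  deduction <| deduction <|
    mp (hyp List.mem_cons_self) (hyp (List.mem_cons_of_mem _ List.mem_cons_self))

theorem conj_imp_left (A B : Fm) : Deriv Γ (imp (conj A B) A) := by
  refine mp (thm (TK.ax3 A (conj A B))) (imp_trans ?_ (imp_neg_neg _))
  -- the remaining goal is `¬A → (A → ¬B)`
  exact deduction <| deduction <| mp (bot_imp (neg B))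
    (mp (hyp (List.mem_cons_of_mem _ List.mem_cons_self)) (hyp List.mem_cons_self))

theorem conj_imp_right (A B : Fm) : Deriv Γ (imp (conj A B) B) :=
  mp (thm (TK.ax3 B (conj A B))) (imp_trans (thm (TK.ax1 (neg B) A)) (imp_neg_neg _))

theorem left {A B : Fm} (h : Deriv Γ (conj A B)) : Deriv Γ A :=
  mp (conj_imp_left A B) h

theorem right {A B : Fm} (h : Deriv Γ (conj A B)) : Deriv Γ B :=
  mp (conj_imp_right A B) h

theorem of_bigConj {l : List Fm} {A : Fm} (h : Deriv Γ (bigConj l)) (hA : A ∈ l) :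
    Deriv Γ A := by
  induction l with
  | nil => cases hA
  | cons B l ih =>
    cases hA with
    | head => exact h.left
    | tail _ hA => exact ih h.right hA

theorem K_of_K_imp {i j k : ℕ} {A B : Fm} (hik : i < k) (hjk : j < k)
    (hAB : Deriv Γ (K i (imp A B))) (hA : Deriv Γ (K j A)) : Deriv Γ (K k B) :=
  mp (mp (thm (TK.tk hik hjk A B)) hAB) hA

end Deriv

/-- In tK, from the hypotheses `K¹(E₁ ∨ E₂)` and the announcement `φ`, the
student can derive `¬E₂` (the test cannot be held on the last day). -/
theorem surprise_test_tK (E₁ E₂ : Fm) :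
    Deriv [K 1 (disj E₁ E₂), phi E₁ E₂] (neg E₂) := by
  apply Deriv.deduction
  set Γ := [E₂, K 1 (disj E₁ E₂), phi E₁ E₂]
  have hφ : Deriv Γ (phi E₁ E₂) := .hyp (by simp [Γ])
  have hE₂ : Deriv Γ E₂ := .hyp (by simp [Γ])
  have hWednesday := hφ.right.right.mp hE₂
  have hNotK13 : Deriv Γ (neg (K 13 E₂)) :=
    hWednesday.left.of_bigConj (List.mem_map.mpr ⟨13, by simp, rfl⟩)
  have hK12 : Deriv Γ (K 12 (neg E₁)) :=
    hWednesday.right.of_bigConj (List.mem_map.mpr ⟨1, by simp, rfl⟩)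
  have hK1 : Deriv Γ (K 1 (imp (neg E₁) E₂)) := .hyp (by simp [Γ, disj])
  exact hNotK13.mp (Deriv.K_of_K_imp (by norm_num) (by norm_num) hK1 hK12)
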